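/- Let S' = K[x_1,...,x_{n-1}], S = S'[x_n], and I ⊊ J monomial ideals of S'. Then sdepth_S(JS/x_n·IS) ≥ min{sdepth_S(JS/IS), sdepth_{S'}(I)}. -/

import Mathlib

open MvPolynomial

/-- The set of exponent vectors of monomials in the Stanley space `aK[Z]`. -/
def stanleyCell {n : ℕ} (a : Fin n →₀ ℕ) (Z : Finset (Fin n)) : Set (Fin n →₀ ℕ) :=
  {b | (∀ i, a i ≤ b i) ∧ ∀ i, i ∉ Z → b i = a i}

/-- A Stanley decomposition of a set `M` of exponent vectors: a finite family of
Stanley spaces whose monomial sets partition `M`. -/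
def IsStanleyDecomp {n : ℕ} (M : Set (Fin n →₀ ℕ))
    (D : Finset ((Fin n →₀ ℕ) × Finset (Fin n))) : Prop :=
  (∀ p ∈ D, stanleyCell p.1 p.2 ⊆ M) ∧
    ∀ b ∈ M, ∃! p : (Fin n →₀ ℕ) × Finset (Fin n), p ∈ D ∧ b ∈ stanleyCell p.1 p.2

/-- Stanley depth of a set of exponent vectors. -/
noncomputable def sdepthSet {n : ℕ} (M : Set (Fin n →₀ ℕ)) : ℕ :=
  sSup {k | ∃ D, IsStanleyDecomp M D ∧ ∀ p ∈ D, k ≤ p.2.card}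

/-- The set of exponent vectors of monomials belonging to an ideal. -/
def monoSet {K : Type} [Field K] {n : ℕ} (I : Ideal (MvPolynomial (Fin n) K)) :
    Set (Fin n →₀ ℕ) := {d | (monomial d (1 : K)) ∈ I}

/-- Stanley depth of a monomial ideal. -/
noncomputable def sdepthIdeal {K : Type} [Field K] {n : ℕ}
    (I : Ideal (MvPolynomial (Fin n) K)) : ℕ := sdepthSet (monoSet I)

/-- Stanley depth of the quotient `J/I` of monomial ideals. -/
noncomputable def sdepthQuot {K : Type} [Field K] {n : ℕ}
    (I J : Ideal (MvPolynomial (Fin n) K)) : ℕ := sdepthSet (monoSet J \ monoSet I)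

/-- Depth of a module with respect to an ideal `m`: the supremum of lengths of
regular sequences on `M` consisting of elements of `m`. -/
noncomputable def mdepth {R : Type} [CommRing R] (m : Ideal R)
    (M : Type) [AddCommGroup M] [Module R M] : ℕ :=
  sSup {k | ∃ rs : List R, rs.length = k ∧ (∀ r ∈ rs, r ∈ m) ∧
    RingTheory.Sequence.IsRegular M rs}

/-- The maximal graded ideal `(x_1, ..., x_n)`. -/
noncomputable def maxIdeal (K : Type) [Field K] (n : ℕ) : Ideal (MvPolynomial (Fin n) K) :=
  Ideal.span (Set.range X)

/-- `J/I` as a module. -/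
abbrev idealQuot {R : Type} [CommRing R] (I J : Ideal R) :=
  ↥J ⧸ (Submodule.comap J.subtype I)

/-- A monomial ideal: generated by monomials. -/
def IsMonomialIdeal {K : Type} [Field K] {n : ℕ}
    (I : Ideal (MvPolynomial (Fin n) K)) : Prop :=
  ∃ G : Set (Fin n →₀ ℕ), I = Ideal.span ((fun d => (monomial d (1 : K))) '' G)

/-- A squarefree monomial ideal: generated by squarefree monomials. -/
def IsSqfreeMonomialIdeal {K : Type} [Field K] {n : ℕ}
    (I : Ideal (MvPolynomial (Fin n) K)) : Prop :=
  ∃ G : Set (Fin n →₀ ℕ), (∀ d ∈ G, ∀ i, d i ≤ 1) ∧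
    I = Ideal.span ((fun d => (monomial d (1 : K))) '' G)

/-- The inclusion `K[x_1,...,x_{n-1}] → K[x_1,...,x_n]`. -/
noncomputable def extMap (K : Type) [Field K] (n : ℕ) :
    MvPolynomial (Fin n) K →+* MvPolynomial (Fin (n + 1)) K :=
  (rename (Fin.castSucc) : MvPolynomial (Fin n) K →ₐ[K] MvPolynomial (Fin (n + 1)) K).toRingHom

/-- Krull dimension of a module: dimension of `R / ann M`. -/
noncomputable def mdim (R : Type) [CommRing R]
    (M : Type) [AddCommGroup M] [Module R M] : WithBot (WithTop ℕ) :=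
  ringKrullDim (R ⧸ Module.annihilator R M)

/-!
Since `I ⊆ J`, the monomials of `JS` outside `x_n IS` are those outside `IS` together with the
monomials of `IS` not divisible by `x_n`, which are exactly the monomials of `I`. A Stanley
decomposition of `I` over `S'` is, with the same cell sizes, one of this second part over `S`, and
decompositions of two disjoint sets combine into one of their union. Whether a monomial lies in an
extended ideal `JS` is seen after `x_n ↦ 1`, a retraction of `S' → S`.
-/

section StanleyDepth

variable {m : ℕ} {M M₁ M₂ : Set (Fin m →₀ ℕ)}

lemma bddAbove_sdepthSet_candidates (hM : M.Nonempty) :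
    BddAbove {k | ∃ D, IsStanleyDecomp M D ∧ ∀ p ∈ D, k ≤ p.2.card} := by
  obtain ⟨b, hb⟩ := hM
  refine ⟨m, ?_⟩
  rintro k ⟨D, hD, hk⟩
  obtain ⟨p, ⟨hpD, -⟩, -⟩ := hD.2 b hb
  exact (hk p hpD).trans (card_finset_fin_le p.2)

lemma le_sdepthSet (hM : M.Nonempty) {D : Finset ((Fin m →₀ ℕ) × Finset (Fin m))} {k : ℕ}
    (hD : IsStanleyDecomp M D) (hk : ∀ p ∈ D, k ≤ p.2.card) : k ≤ sdepthSet M :=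
  le_csSup (bddAbove_sdepthSet_candidates hM) ⟨D, hD, hk⟩

/-- The empty decomposition of `∅` satisfies every bound, so `sdepthSet ∅` is the junk value `0`
(the `sSup` of an unbounded set). -/
lemma nonempty_of_sdepthSet_pos (h : 0 < sdepthSet M) : M.Nonempty := by
  by_contra hM
  rw [Set.not_nonempty_iff_eq_empty] at hM
  subst hM
  refine h.ne' (Nat.sSup_of_not_bddAbove ?_)
  rintro ⟨u, hu⟩
  have : u + 1 ≤ u := hu ⟨∅, ⟨by simp, by simp⟩, by simp⟩
  omega

lemma exists_decomp_of_sdepthSet_pos (h : 0 < sdepthSet M) :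
    ∃ D, IsStanleyDecomp M D ∧ ∀ p ∈ D, sdepthSet M ≤ p.2.card := by
  refine Nat.sSup_mem ?_ (bddAbove_sdepthSet_candidates (nonempty_of_sdepthSet_pos h))
  by_contra hs
  rw [Set.not_nonempty_iff_eq_empty] at hs
  rw [sdepthSet, hs, csSup_empty] at h
  exact lt_irrefl 0 h

lemma IsStanleyDecomp.existsUnique_union_of_mem {D₁ D₂ : Finset ((Fin m →₀ ℕ) × Finset (Fin m))}
    {b : Fin m →₀ ℕ} (hM : Disjoint M₁ M₂) (hD₁ : IsStanleyDecomp M₁ D₁)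
    (hD₂ : IsStanleyDecomp M₂ D₂) (hb : b ∈ M₁) :
    ∃! p, p ∈ D₁ ∪ D₂ ∧ b ∈ stanleyCell p.1 p.2 := by
  obtain ⟨p, hp, hu⟩ := hD₁.2 b hb
  refine ⟨p, ⟨Finset.mem_union_left _ hp.1, hp.2⟩, fun q ⟨hq, hbq⟩ => ?_⟩
  rcases Finset.mem_union.1 hq with hq | hq
  · exact hu q ⟨hq, hbq⟩
  · exact (Set.disjoint_left.1 hM hb (hD₂.1 q hq hbq)).elim

lemma IsStanleyDecomp.union {D₁ D₂ : Finset ((Fin m →₀ ℕ) × Finset (Fin m))}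
    (hM : Disjoint M₁ M₂) (hD₁ : IsStanleyDecomp M₁ D₁) (hD₂ : IsStanleyDecomp M₂ D₂) :
    IsStanleyDecomp (M₁ ∪ M₂) (D₁ ∪ D₂) := by
  refine ⟨fun p hp => ?_, fun b hb => ?_⟩
  · rcases Finset.mem_union.1 hp with hp | hp
    · exact (hD₁.1 p hp).trans Set.subset_union_left
    · exact (hD₂.1 p hp).trans Set.subset_union_right
  · rcases hb with hb | hb
    · exact hD₁.existsUnique_union_of_mem hM hD₂ hb
    · rw [Finset.union_comm]
      exact hD₂.existsUnique_union_of_mem hM.symm hD₁ hb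

lemma min_sdepthSet_le_sdepthSet_union (hM : Disjoint M₁ M₂) :
    min (sdepthSet M₁) (sdepthSet M₂) ≤ sdepthSet (M₁ ∪ M₂) := by
  rcases Nat.eq_zero_or_pos (min (sdepthSet M₁) (sdepthSet M₂)) with h | h
  · simp [h]
  have h₁ := h.trans_le (min_le_left _ _)
  have h₂ := h.trans_le (min_le_right _ _)
  obtain ⟨D₁, hD₁, hk₁⟩ := exists_decomp_of_sdepthSet_pos h₁
  obtain ⟨D₂, hD₂, hk₂⟩ := exists_decomp_of_sdepthSet_pos h₂
  refine le_sdepthSet ((nonempty_of_sdepthSet_pos h₁).mono Set.subset_union_left)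
    (hD₁.union hM hD₂) fun p hp => ?_
  rcases Finset.mem_union.1 hp with hp | hp
  · exact (min_le_left _ _).trans (hk₁ p hp)
  · exact (min_le_right _ _).trans (hk₂ p hp)

end StanleyDepth

section LastCoordinate

variable {n : ℕ}

noncomputable def dropLast (b : Fin (n + 1) →₀ ℕ) : Fin n →₀ ℕ :=
  Finsupp.equivFunOnFinite.symm fun i => b i.castSucc

@[simp] lemma dropLast_apply (b : Fin (n + 1) →₀ ℕ) (i : Fin n) : dropLast b i = b i.castSucc :=
  rfl

@[simp] lemma embDomain_castSuccEmb_last (a : Fin n →₀ ℕ) :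
    a.embDomain Fin.castSuccEmb (Fin.last n) = 0 :=
  Finsupp.embDomain_of_notMem_range _ _ _ fun ⟨i, hi⟩ => (Fin.castSucc_lt_last i).ne hi

@[simp] lemma embDomain_castSuccEmb_castSucc (a : Fin n →₀ ℕ) (i : Fin n) :
    a.embDomain Fin.castSuccEmb i.castSucc = a i :=
  Finsupp.embDomain_apply_self _ _ _

@[simp] lemma dropLast_embDomain_castSuccEmb (a : Fin n →₀ ℕ) :
    dropLast (a.embDomain Fin.castSuccEmb) = a := by
  ext i; simp

lemma single_last_add_embDomain_dropLast (b : Fin (n + 1) →₀ ℕ) :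
    Finsupp.single (Fin.last n) (b (Fin.last n)) + (dropLast b).embDomain Fin.castSuccEmb = b := by
  ext i
  induction i using Fin.lastCases with
  | last => simp
  | cast j => simp

def liftLastZero (M : Set (Fin n →₀ ℕ)) : Set (Fin (n + 1) →₀ ℕ) :=
  {b | b (Fin.last n) = 0 ∧ dropLast b ∈ M}

noncomputable def liftCell (p : (Fin n →₀ ℕ) × Finset (Fin n)) :
    (Fin (n + 1) →₀ ℕ) × Finset (Fin (n + 1)) :=
  (p.1.embDomain Fin.castSuccEmb, p.2.map Fin.castSuccEmb)

lemma stanleyCell_liftCell (p : (Fin n →₀ ℕ) × Finset (Fin n)) :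
    stanleyCell (liftCell p).1 (liftCell p).2 = liftLastZero (stanleyCell p.1 p.2) := by
  have last_notMem : Fin.last n ∉ p.2.map Fin.castSuccEmb := by
    simp [Fin.castSucc_ne_last]
  ext b
  dsimp only [liftCell]
  constructor
  · rintro ⟨hle, heq⟩
    exact ⟨by simpa using heq _ last_notMem, fun i => by simpa using hle i.castSucc,
      fun i hi => by simpa using heq i.castSucc (by simpa using hi)⟩
  · rintro ⟨h0, hle, heq⟩
    refine ⟨fun i => ?_, fun i hi => ?_⟩ <;> induction i using Fin.lastCases
    · simp
    · simpa using hle _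
    · simpa using h0
    · simpa using heq _ (by simpa using hi)

lemma IsStanleyDecomp.liftLastZero {M : Set (Fin n →₀ ℕ)}
    {D : Finset ((Fin n →₀ ℕ) × Finset (Fin n))} (hD : IsStanleyDecomp M D) :
    IsStanleyDecomp (liftLastZero M) (D.image liftCell) := by
  refine ⟨?_, ?_⟩
  · simp only [Finset.mem_image, forall_exists_index, and_imp]
    rintro _ p hp rfl b hb
    rw [stanleyCell_liftCell] at hb
    exact ⟨hb.1, hD.1 p hp hb.2⟩
  · rintro b ⟨hb0, hb⟩
    obtain ⟨p, ⟨hp, hbp⟩, hu⟩ := hD.2 _ hb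
    refine ⟨liftCell p, ⟨Finset.mem_image_of_mem _ hp, ?_⟩, ?_⟩
    · rw [stanleyCell_liftCell]
      exact ⟨hb0, hbp⟩
    · rintro _ ⟨hq', hbq⟩
      obtain ⟨q, hq, rfl⟩ := Finset.mem_image.1 hq'
      rw [stanleyCell_liftCell] at hbq
      rw [hu q ⟨hq, hbq.2⟩]

lemma sdepthSet_le_sdepthSet_liftLastZero (M : Set (Fin n →₀ ℕ)) :
    sdepthSet M ≤ sdepthSet (liftLastZero M) := by
  rcases Nat.eq_zero_or_pos (sdepthSet M) with h | h
  · simp [h]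
  obtain ⟨D, hD, hk⟩ := exists_decomp_of_sdepthSet_pos h
  obtain ⟨a, ha⟩ := nonempty_of_sdepthSet_pos h
  have hne : (liftLastZero M).Nonempty := ⟨a.embDomain Fin.castSuccEmb, by simp, by simpa using ha⟩
  refine le_sdepthSet hne hD.liftLastZero ?_
  simp only [Finset.mem_image, forall_exists_index, and_imp]
  rintro _ p hp rfl
  simpa [liftCell] using hk p hp

lemma preimage_dropLast_diff_eq_union {A B : Set (Fin n →₀ ℕ)} (hBA : B ⊆ A) :
    dropLast ⁻¹' A \ ({b | b (Fin.last n) ≠ 0} ∩ dropLast ⁻¹' B) =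
      (dropLast ⁻¹' A \ dropLast ⁻¹' B) ∪ liftLastZero B := by
  ext b
  simp only [liftLastZero, Set.mem_sdiff, Set.mem_inter_iff, Set.mem_preimage,
    Set.mem_ofPred_eq, Set.mem_union]
  have := @hBA (dropLast b)
  tauto

lemma disjoint_preimage_dropLast_diff_liftLastZero (A B : Set (Fin n →₀ ℕ)) :
    Disjoint (dropLast ⁻¹' A \ dropLast ⁻¹' B) (liftLastZero B) :=
  Set.disjoint_left.2 fun _ h₁ h₂ => h₁.2 h₂.2

end LastCoordinate

section ExtendedIdeals

variable {K : Type} [Field K] {n : ℕ}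

lemma monomial_eq_X_last_pow_mul_extMap (b : Fin (n + 1) →₀ ℕ) :
    monomial b (1 : K) =
      X (Fin.last n) ^ b (Fin.last n) * extMap K n (monomial (dropLast b) 1) := by
  rw [extMap, AlgHom.toRingHom_eq_coe, RingHom.coe_coe, rename_monomial, X_pow_eq_monomial,
    monomial_mul, one_mul, ← Fin.coe_castSuccEmb, ← Finsupp.embDomain_eq_mapDomain,
    single_last_add_embDomain_dropLast]

noncomputable def evalLastOne : MvPolynomial (Fin (n + 1)) K →ₐ[K] MvPolynomial (Fin n) K :=
  aeval (Fin.lastCases 1 X)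

lemma evalLastOne_extMap (p : MvPolynomial (Fin n) K) : evalLastOne (extMap K n p) = p := by
  rw [extMap, evalLastOne, AlgHom.toRingHom_eq_coe, RingHom.coe_coe, aeval_rename]
  convert aeval_X_left_apply p
  funext j
  simp

lemma evalLastOne_monomial (b : Fin (n + 1) →₀ ℕ) :
    evalLastOne (monomial b (1 : K)) = monomial (dropLast b) 1 := by
  rw [monomial_eq_X_last_pow_mul_extMap, map_mul, map_pow, evalLastOne_extMap]
  simp [evalLastOne]

lemma monomial_mem_map_extMap_iff (J : Ideal (MvPolynomial (Fin n) K)) (b : Fin (n + 1) →₀ ℕ) :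
    monomial b (1 : K) ∈ J.map (extMap K n) ↔ monomial (dropLast b) (1 : K) ∈ J := by
  refine ⟨fun h => ?_, fun h => ?_⟩
  · have hret : (evalLastOne : MvPolynomial (Fin (n + 1)) K →ₐ[K] _).toRingHom.comp
        (extMap K n) = RingHom.id _ := RingHom.ext evalLastOne_extMap
    have := Ideal.mem_map_of_mem (evalLastOne (K := K)).toRingHom h
    rwa [Ideal.map_map, hret, Ideal.map_id, AlgHom.toRingHom_eq_coe, RingHom.coe_coe,
      evalLastOne_monomial] at this
  · rw [monomial_eq_X_last_pow_mul_extMap]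
    exact Ideal.mul_mem_left _ _ (Ideal.mem_map_of_mem _ h)

lemma monomial_mem_span_X_last_mul_map_extMap_iff (I : Ideal (MvPolynomial (Fin n) K))
    (b : Fin (n + 1) →₀ ℕ) :
    monomial b (1 : K) ∈ Ideal.span {X (Fin.last n)} * I.map (extMap K n) ↔
      b (Fin.last n) ≠ 0 ∧ monomial (dropLast b) (1 : K) ∈ I := by
  refine ⟨fun h => ⟨?_, ?_⟩, fun ⟨h0, hI⟩ => ?_⟩
  · simpa using X_dvd_monomial.1 (Ideal.mem_span_singleton.1 (Ideal.mul_le_left h))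
  · exact (monomial_mem_map_extMap_iff I b).1 (Ideal.mul_le_right h)
  · obtain ⟨k, hk⟩ := Nat.exists_eq_succ_of_ne_zero h0
    rw [monomial_eq_X_last_pow_mul_extMap, hk, pow_succ', mul_assoc]
    exact Ideal.mul_mem_mul (Ideal.mem_span_singleton_self _)
      (Ideal.mul_mem_left _ _ (Ideal.mem_map_of_mem _ hI))

lemma monoSet_map_extMap (J : Ideal (MvPolynomial (Fin n) K)) :
    monoSet (J.map (extMap K n)) = dropLast ⁻¹' monoSet J :=
  Set.ext (monomial_mem_map_extMap_iff J)

lemma monoSet_span_X_last_mul_map_extMap (I : Ideal (MvPolynomial (Fin n) K)) :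
    monoSet (Ideal.span {X (Fin.last n)} * I.map (extMap K n)) =
      {b | b (Fin.last n) ≠ 0} ∩ dropLast ⁻¹' monoSet I :=
  Set.ext (monomial_mem_span_X_last_mul_map_extMap_iff I)

end ExtendedIdeals

theorem sdepth_JS_mod_xnIS_general {K : Type} [Field K] {n : ℕ}
    (I J : Ideal (MvPolynomial (Fin n) K))
    (hIJ : I < J) :
    sdepthQuot (Ideal.span {X (Fin.last n)} * Ideal.map (extMap K n) I)
        (Ideal.map (extMap K n) J) ≥
      min (sdepthQuot (Ideal.map (extMap K n) I) (Ideal.map (extMap K n) J))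
        (sdepthIdeal I) := by
  have hIJ' : monoSet I ⊆ monoSet J := fun _ hd => hIJ.le hd
  rw [ge_iff_le, sdepthQuot, sdepthQuot, sdepthIdeal, monoSet_span_X_last_mul_map_extMap,
    monoSet_map_extMap, monoSet_map_extMap, preimage_dropLast_diff_eq_union hIJ']
  calc _ ≤ min (sdepthSet (dropLast ⁻¹' monoSet J \ dropLast ⁻¹' monoSet I))
          (sdepthSet (liftLastZero (monoSet I))) :=
        min_le_min_left _ (sdepthSet_le_sdepthSet_liftLastZero _)
    _ ≤ _ := min_sdepthSet_le_sdepthSet_union (disjoint_preimage_dropLast_diff_liftLastZero _ _)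

theorem sdepth_JS_mod_xnIS {K : Type} [Field K] {n : ℕ}
    (I J : Ideal (MvPolynomial (Fin n) K))
    (hI : IsMonomialIdeal I) (hJ : IsMonomialIdeal J) (hIJ : I < J) :
    sdepthQuot (Ideal.span {X (Fin.last n)} * Ideal.map (extMap K n) I)
        (Ideal.map (extMap K n) J) ≥
      min (sdepthQuot (Ideal.map (extMap K n) I) (Ideal.map (extMap K n) J))
        (sdepthIdeal I) :=
  sdepth_JS_mod_xnIS_general I J hIJ
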